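/- arXiv:1407.3619 — 3 statements merged into one kernel-verified Lean document; each statement's English description precedes it below -/
import Mathlib

section
/- Let U be an r-dimensional subspace of ℝ^d with coherence μ(U) ≤ μ₀, let Ũ be a subspace of U, and let x ∈ U with x ∉ Ũ. Let Ω be a list of m indices drawn independently and uniformly at random with replacement from [d]. If m ≥ 32·r·μ₀·log²(2r/δ), then with probability at least 1 − 4δ one has ‖x_Ω − P_{Ũ_Ω} x_Ω‖₂ > 0. -/
open Matrix

/- Probability of an event under the uniform distribution on a finite type. -/
open scoped Classical in
noncomputable def unifProb {α : Type*} [Fintype α] (P : α → Prop) : ℝ :=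
  (Finset.univ.filter fun a => P a).card / Fintype.card α

/-- Squared Euclidean norm of a vector in ℝ^d. -/
def sq2 {d : ℕ} (x : Fin d → ℝ) : ℝ := ∑ i, x i ^ 2

/-- Vector coherence μ(v) = d·‖v‖∞²/‖v‖₂². -/
noncomputable def vecCoh {d : ℕ} (v : Fin d → ℝ) : ℝ :=
  ((d : ℝ) * ⨆ i, v i ^ 2) / sq2 v

/-- Coherence μ(U) = (d/r)·max_i ‖P_U e_i‖₂² of the column span of a d×r matrix U with
orthonormal columns; here ‖P_U e_i‖₂² = ∑ k (U i k)². -/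
noncomputable def matCoh {d r : ℕ} (U : Matrix (Fin d) (Fin r) ℝ) : ℝ :=
  ((d : ℝ) / r) * ⨆ i : Fin d, ∑ k, U i k ^ 2

/-- ‖y_Ω − P_{U_Ω} y_Ω‖₂²: squared norm of the residual of the orthogonal projection of the
subsampled vector y_Ω onto the column span of the subsampled matrix U_Ω. -/
noncomputable def projResidSq {d r m : ℕ} (U : Matrix (Fin d) (Fin r) ℝ)
    (y : Fin d → ℝ) (Ω : Fin m → Fin d) : ℝ :=
  let yΩ : EuclideanSpace ℝ (Fin m) := WithLp.toLp 2 (fun j => y (Ω j))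
  let S : Submodule ℝ (EuclideanSpace ℝ (Fin m)) :=
    Submodule.span ℝ (Set.range fun k : Fin r => (WithLp.toLp 2 (fun j => U (Ω j) k) : EuclideanSpace ℝ (Fin m)))
  ‖yΩ - (S.orthogonalProjection yΩ : EuclideanSpace ℝ (Fin m))‖ ^ 2

/-- The row-subsampled matrix U_Ω whose j-th row is the Ω(j)-th row of U. -/
def subMat {d r m : ℕ} (U : Matrix (Fin d) (Fin r) ℝ) (Ω : Fin m → Fin d) :
    Matrix (Fin m) (Fin r) ℝ :=
  Matrix.of fun j k => U (Ω j) k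

/-- Spectral (ℓ2 operator) norm of a matrix. -/
noncomputable def specNorm {p q : ℕ} (M : Matrix (Fin p) (Fin q) ℝ) : ℝ :=
  ‖(Matrix.toEuclideanLin M).toContinuousLinearMap‖

/-!
If the residual vanishes, then `x_Ω = Ũ_Ω b = U_Ω C b` while also `x_Ω = U_Ω c`; since `x ∉ Ũ`,
`C b - c ≠ 0` lies in the kernel of `U_Ω`, so the sampled rows of `U` do not span `ℝ^r`.  It
therefore suffices to bound the probability that `m` uniform rows of `U` fail to span.

The rows of `U` form a Parseval frame of `ℝ^r` whose vectors have squared norm at most `rμ₀/d`,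
so a subspace of dimension `t` misses at least a fraction `q_t = (r - t)/(rμ₀)` of the rows.  As in
the coupon collector problem, once the sampled rows span a space of dimension `t`, each new sample
raises the dimension with probability at least `q_t`.  Spending `⌈log(r/4δ)/q_t⌉` samples on
stage `t` fails with probability at most `4δ/r`, and these blocks fit into `m` samples because
`∑_t 1/q_t = rμ₀·H_r ≤ rμ₀(1 + log r)`.
-/
section UniformProbability

variable {α : Type*} [Fintype α]

open scoped Classical in
theorem unifProb_eq_sum_div (P : α → Prop) :
    unifProb P = (∑ a, if P a then (1 : ℝ) else 0) / Fintype.card α := by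
  rw [unifProb, Finset.sum_boole]

theorem unifProb_nonneg (P : α → Prop) : 0 ≤ unifProb P := by
  unfold unifProb
  positivity

theorem unifProb_le_one (P : α → Prop) : unifProb P ≤ 1 := by
  rw [unifProb_eq_sum_div]
  refine div_le_one_of_le₀ ?_ (Nat.cast_nonneg _)
  calc _ ≤ ∑ _a : α, (1 : ℝ) := Finset.sum_le_sum fun a _ => by split_ifs <;> norm_num
    _ = _ := by simp

theorem unifProb_eq_zero {P : α → Prop} (h : ∀ a, ¬P a) : unifProb P = 0 := by
  simp [unifProb_eq_sum_div, h]

theorem unifProb_mono {P Q : α → Prop} (h : ∀ a, P a → Q a) : unifProb P ≤ unifProb Q := by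
  rw [unifProb_eq_sum_div, unifProb_eq_sum_div]
  gcongr with a
  split_ifs with hP hQ
  exacts [le_rfl, absurd (h a hP) hQ, zero_le_one, le_rfl]

theorem unifProb_not [Nonempty α] (P : α → Prop) :
    unifProb (fun a => ¬P a) = 1 - unifProb P := by
  rw [unifProb_eq_sum_div, unifProb_eq_sum_div, eq_sub_iff_add_eq, ← add_div,
    ← Finset.sum_add_distrib, div_eq_one_iff_eq (by positivity), Fintype.card,
    Finset.card_eq_sum_ones, Nat.cast_sum]
  exact Finset.sum_congr rfl fun a _ => by split_ifs <;> simp_all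

theorem unifProb_fin_cons {j : ℕ} (P : (Fin (j + 1) → α) → Prop) :
    unifProb P = (∑ g : Fin j → α, unifProb fun i => P (Fin.cons i g)) / Fintype.card α ^ j := by
  simp only [unifProb_eq_sum_div, Fintype.card_fun, Fintype.card_fin, ← Finset.sum_div]
  rw [← (Fin.consEquiv fun _ => α).sum_comp, Fintype.sum_prod_type, Finset.sum_comm, div_div,
    ← pow_succ', Nat.cast_pow]
  rfl

open scoped Classical in
theorem unifProb_fin_cons_le {j : ℕ} {P : (Fin (j + 1) → α) → Prop}
    {A B : (Fin j → α) → Prop} {a b : ℝ}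
    (h : ∀ g, unifProb (fun i => P (Fin.cons i g))
      ≤ a * (if A g then 1 else 0) + b * (if B g then 1 else 0)) :
    unifProb P ≤ a * unifProb A + b * unifProb B := by
  rw [unifProb_fin_cons, unifProb_eq_sum_div A, unifProb_eq_sum_div B, Fintype.card_fun,
    Fintype.card_fin, Nat.cast_pow]
  calc _ ≤ (∑ g, (a * (if A g then 1 else 0) + b * (if B g then 1 else 0))) / Fintype.card α ^ j :=
        div_le_div_of_nonneg_right (Finset.sum_le_sum fun g _ => h g) (by positivity)
    _ = _ := by rw [Finset.sum_add_distrib, ← Finset.mul_sum, ← Finset.mul_sum]; ring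

end UniformProbability

section SampleSpan

open Module

variable (K : Type*) {ι E : Type*} [Field K] [AddCommGroup E] [Module K E]

def sampleSpan (f : ι → E) {j : ℕ} (g : Fin j → ι) : Submodule K E :=
  Submodule.span K (Set.range (f ∘ g))

variable {K}

theorem sampleSpan_cons (f : ι → E) {j : ℕ} (i : ι) (g : Fin j → ι) :
    sampleSpan K f (Fin.cons i g) = K ∙ f i ⊔ sampleSpan K f g := by
  rw [sampleSpan, sampleSpan, Fin.comp_cons, Fin.range_cons, Submodule.span_insert]

theorem sampleSpan_le_cons (f : ι → E) {j : ℕ} (i : ι) (g : Fin j → ι) :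
    sampleSpan K f g ≤ sampleSpan K f (Fin.cons i g) := by
  rw [sampleSpan_cons]
  exact le_sup_right

variable [FiniteDimensional K E]

theorem mem_sampleSpan_of_finrank_cons_le {f : ι → E} {j : ℕ} {i : ι} {g : Fin j → ι}
    (h : finrank K (sampleSpan K f (Fin.cons i g)) ≤ finrank K (sampleSpan K f g)) :
    f i ∈ sampleSpan K f g := by
  rw [Submodule.eq_of_le_of_finrank_le (sampleSpan_le_cons f i g) h, sampleSpan_cons]
  exact Submodule.mem_sup_left (Submodule.mem_span_singleton_self _)

variable (K) [Fintype ι] (f : ι → E)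

noncomputable def lowRankProb (j s : ℕ) : ℝ :=
  unifProb fun g : Fin j → ι => finrank K (sampleSpan K f g) < s

variable {K}

theorem lowRankProb_succ_le (j s : ℕ) : lowRankProb K f (j + 1) s ≤ lowRankProb K f j s := by
  have key := unifProb_fin_cons_le (a := 1) (b := 0) (B := fun _ => True)
    (A := fun g : Fin j → ι => finrank K (sampleSpan K f g) < s)
    (P := fun g => finrank K (sampleSpan K f g) < s) fun g => by
      by_cases hg : finrank K (sampleSpan K f g) < s
      · simpa [hg] using unifProb_le_one _
      · rw [if_neg hg, unifProb_eq_zero fun i hi => hg <|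
          (Submodule.finrank_mono (sampleSpan_le_cons f i g)).trans_lt hi]
        simp
  simpa [lowRankProb] using key

variable [Nonempty ι]

theorem lowRankProb_succ_succ_le {s : ℕ} {q : ℝ}
    (hq : ∀ W : Submodule K E, finrank K W = s → q ≤ unifProb fun i => f i ∉ W) (j : ℕ) :
    lowRankProb K f (j + 1) (s + 1)
      ≤ (1 - q) * lowRankProb K f j (s + 1) + q * lowRankProb K f j s := by
  refine unifProb_fin_cons_le fun g => ?_
  rcases lt_trichotomy (finrank K (sampleSpan K f g)) s with hlt | heq | hgt
  · rw [if_pos (by omega), if_pos hlt]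
    linarith [unifProb_le_one fun i => finrank K (sampleSpan K f (Fin.cons i g)) < s + 1]
  · rw [if_pos (by omega), if_neg (by omega)]
    calc unifProb (fun i => finrank K (sampleSpan K f (Fin.cons i g)) < s + 1)
        ≤ unifProb fun i => f i ∈ sampleSpan K f g :=
          unifProb_mono fun i hi => mem_sampleSpan_of_finrank_cons_le (by omega)
      _ ≤ 1 - q := by
          linarith [hq _ heq, unifProb_not fun i => f i ∈ sampleSpan K f g]
      _ = _ := by ring
  · have hzero : unifProb (fun i => finrank K (sampleSpan K f (Fin.cons i g)) < s + 1) = 0 :=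
      unifProb_eq_zero fun i hi => by
        have := Submodule.finrank_mono (sampleSpan_le_cons (K := K) f i g)
        omega
    rw [if_neg (by omega), if_neg (by omega), hzero]
    simp

theorem lowRankProb_add_le {s : ℕ} {q : ℝ}
    (hq : ∀ W : Submodule K E, finrank K W = s → q ≤ unifProb fun i => f i ∉ W)
    (hq₀ : 0 ≤ q) (hq₁ : q ≤ 1) (j L : ℕ) :
    lowRankProb K f (j + L) (s + 1) ≤ (1 - q) ^ L + lowRankProb K f j s := by
  induction L with
  | zero =>
    rw [add_zero, pow_zero]
    exact (unifProb_le_one _).trans (le_add_of_nonneg_right (unifProb_nonneg _))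
  | succ L ih =>
    have hanti : Antitone fun j => lowRankProb K f j s :=
      antitone_nat_of_succ_le fun j => lowRankProb_succ_le f j s
    calc lowRankProb K f (j + L + 1) (s + 1)
        ≤ (1 - q) * lowRankProb K f (j + L) (s + 1) + q * lowRankProb K f (j + L) s :=
          lowRankProb_succ_succ_le f hq _
      _ ≤ (1 - q) * ((1 - q) ^ L + lowRankProb K f j s) + q * lowRankProb K f j s := by
          gcongr
          exact hanti (Nat.le_add_right j L)
      _ = (1 - q) ^ (L + 1) + lowRankProb K f j s := by ring

theorem lowRankProb_le_sum {s : ℕ} {q : ℕ → ℝ}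
    (hq : ∀ t < s, ∀ W : Submodule K E, finrank K W = t → q t ≤ unifProb fun i => f i ∉ W)
    (hq₀ : ∀ t < s, 0 ≤ q t) (hq₁ : ∀ t < s, q t ≤ 1) (L : ℕ → ℕ) {j : ℕ}
    (hj : ∑ t ∈ Finset.range s, L t ≤ j) :
    lowRankProb K f j s ≤ ∑ t ∈ Finset.range s, (1 - q t) ^ L t := by
  induction s generalizing j with
  | zero => simp [lowRankProb, unifProb_eq_zero]
  | succ s ih =>
    rw [Finset.sum_range_succ] at hj ⊢
    obtain ⟨j, rfl⟩ : ∃ j', j = j' + L s := ⟨j - L s, by omega⟩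
    have hrest := ih (fun t ht => hq t (by omega)) (fun t ht => hq₀ t (by omega))
      (fun t ht => hq₁ t (by omega)) (j := j) (by omega)
    linarith [lowRankProb_add_le f (hq s s.lt_succ_self) (hq₀ s s.lt_succ_self)
      (hq₁ s s.lt_succ_self) j (L s)]

end SampleSpan

section ParsevalFrame

open Module

variable {ι E : Type*} [Fintype ι] [NormedAddCommGroup E] [InnerProductSpace ℝ E]
  [FiniteDimensional ℝ E]

open scoped Classical in
theorem finrank_orthogonal_le_card_not_mem_mul {v : ι → E}
    (hv : ∀ a, ∑ i, inner ℝ (v i) a ^ 2 = ‖a‖ ^ 2) {B : ℝ} (hB : ∀ i, ‖v i‖ ^ 2 ≤ B)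
    (W : Submodule ℝ E) :
    (finrank ℝ Wᗮ : ℝ) ≤ (Finset.univ.filter fun i => v i ∉ W).card * B := by
  let b := stdOrthonormalBasis ℝ Wᗮ
  have hb : Orthonormal ℝ fun t => (b t : E) := b.orthonormal.comp_linearIsometry Wᗮ.subtypeₗᵢ
  have hbessel (i : ι) : ∑ t, inner ℝ (v i) (b t : E) ^ 2 ≤ if v i ∉ W then B else 0 := by
    by_cases hi : v i ∈ W
    · simp [hi, Submodule.inner_right_of_mem_orthogonal hi (b _).2]
    · rw [if_pos hi]
      calc ∑ t, inner ℝ (v i) (b t : E) ^ 2 = ∑ t, ‖inner ℝ (b t : E) (v i)‖ ^ 2 := by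
            simp [real_inner_comm, sq_abs]
        _ ≤ ‖v i‖ ^ 2 := hb.sum_inner_products_le (v i) (s := Finset.univ)
        _ ≤ B := hB i
  calc (finrank ℝ Wᗮ : ℝ) = ∑ t, ‖(b t : E)‖ ^ 2 := by simp [hb.1]
    _ = ∑ i, ∑ t, inner ℝ (v i) (b t : E) ^ 2 := by simp only [← hv]; exact Finset.sum_comm
    _ ≤ ∑ i, if v i ∉ W then B else 0 := Finset.sum_le_sum fun i _ => hbessel i
    _ = _ := by rw [← Finset.sum_filter, Finset.sum_const, nsmul_eq_mul]

end ParsevalFrame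

section Coherence

open Module

variable {d r : ℕ} {U : Matrix (Fin d) (Fin r) ℝ} {μ₀ : ℝ}

def euclideanRow (U : Matrix (Fin d) (Fin r) ℝ) (i : Fin d) : EuclideanSpace ℝ (Fin r) :=
  WithLp.toLp 2 (U i)

theorem inner_euclideanRow (U : Matrix (Fin d) (Fin r) ℝ) (i : Fin d)
    (a : EuclideanSpace ℝ (Fin r)) : inner ℝ (euclideanRow U i) a = (U *ᵥ a.ofLp) i := by
  simp [euclideanRow, EuclideanSpace.inner_eq_star_dotProduct, Matrix.mulVec, dotProduct_comm]

theorem sum_inner_euclideanRow_sq (hU : Uᵀ * U = 1) (a : EuclideanSpace ℝ (Fin r)) :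
    ∑ i, inner ℝ (euclideanRow U i) a ^ 2 = ‖a‖ ^ 2 := by
  simp_rw [inner_euclideanRow, sq]
  calc ∑ i, (U *ᵥ a.ofLp) i * (U *ᵥ a.ofLp) i = a.ofLp ⬝ᵥ ((Uᵀ * U) *ᵥ a.ofLp) := by
        rw [← Matrix.mulVec_mulVec, Matrix.dotProduct_mulVec, Matrix.vecMul_transpose]; rfl
    _ = ‖a‖ * ‖a‖ := by
        rw [hU, Matrix.one_mulVec, ← real_inner_self_eq_norm_mul_norm,
          EuclideanSpace.inner_eq_star_dotProduct]
        simp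

theorem norm_euclideanRow_sq_le (hd : 0 < d) (hr : 0 < r) (hcoh : matCoh U ≤ μ₀) (i : Fin d) :
    ‖euclideanRow U i‖ ^ 2 ≤ r * μ₀ / d := by
  have hrow : ‖euclideanRow U i‖ ^ 2 = ∑ k, U i k ^ 2 := by
    simp [euclideanRow, EuclideanSpace.norm_sq_eq]
  have hsup : ∑ k, U i k ^ 2 ≤ ⨆ i, ∑ k, U i k ^ 2 :=
    le_ciSup (f := fun i => ∑ k, U i k ^ 2) (Set.finite_range _).bddAbove i
  rw [matCoh, div_mul_eq_mul_div, div_le_iff₀ (by positivity)] at hcoh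
  rw [hrow, le_div_iff₀ (by positivity)]
  nlinarith [(Nat.cast_pos.mpr hd : (0 : ℝ) < d)]

open scoped Classical in
theorem sub_finrank_le_card_not_mem_mul (hd : 0 < d) (hr : 0 < r) (hU : Uᵀ * U = 1)
    (hcoh : matCoh U ≤ μ₀) (W : Submodule ℝ (EuclideanSpace ℝ (Fin r))) :
    (r - finrank ℝ W : ℝ) ≤
      (Finset.univ.filter fun i => euclideanRow U i ∉ W).card * (r * μ₀ / d) := by
  have hsum : (finrank ℝ W + finrank ℝ Wᗮ : ℝ) = r := by
    exact_mod_cast (W.finrank_add_finrank_orthogonal).trans finrank_euclideanSpace_fin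
  rw [show (r - finrank ℝ W : ℝ) = finrank ℝ Wᗮ by linarith]
  exact finrank_orthogonal_le_card_not_mem_mul (sum_inner_euclideanRow_sq hU)
    (norm_euclideanRow_sq_le hd hr hcoh) W

theorem one_le_of_matCoh_le (hd : 0 < d) (hr : 0 < r) (hU : Uᵀ * U = 1) (hcoh : matCoh U ≤ μ₀) :
    1 ≤ μ₀ := by
  classical
  have h := sub_finrank_le_card_not_mem_mul hd hr hU hcoh ⊥
  have hcard : ((Finset.univ.filter fun i => euclideanRow U i ∉ (⊥ : Submodule ℝ _)).card : ℝ)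
      ≤ d := by exact_mod_cast (Finset.card_filter_le _ _).trans (Finset.card_fin d).le
  rw [finrank_bot, Nat.cast_zero, sub_zero] at h
  have hr' : (0 : ℝ) < r := by exact_mod_cast hr
  have hpos : 0 < r * μ₀ / d := pos_of_mul_pos_right (hr'.trans_le h) (Nat.cast_nonneg _)
  have hrμ : (r : ℝ) ≤ r * μ₀ :=
    calc (r : ℝ) ≤ d * (r * μ₀ / d) := h.trans (by gcongr)
      _ = r * μ₀ := by field_simp
  nlinarith

noncomputable def escapeProb (r : ℕ) (μ₀ : ℝ) (t : ℕ) : ℝ := (r - t) / (r * μ₀)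

theorem escapeProb_le_unifProb (hd : 0 < d) (hr : 0 < r) (hU : Uᵀ * U = 1)
    (hcoh : matCoh U ≤ μ₀) (W : Submodule ℝ (EuclideanSpace ℝ (Fin r))) :
    escapeProb r μ₀ (finrank ℝ W) ≤ unifProb fun i => euclideanRow U i ∉ W := by
  have hμ := one_le_of_matCoh_le hd hr hU hcoh
  have h := sub_finrank_le_card_not_mem_mul hd hr hU hcoh W
  rw [escapeProb, unifProb, Fintype.card_fin, div_le_div_iff₀ (by positivity) (by positivity)]
  rw [mul_div_assoc', le_div_iff₀ (by positivity)] at h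
  convert h using 4
  ext
  simp

theorem escapeProb_pos {r t : ℕ} {μ₀ : ℝ} (hμ : 0 < μ₀) (ht : t < r) : 0 < escapeProb r μ₀ t := by
  have : (t : ℝ) < r := by exact_mod_cast ht
  have : (0 : ℝ) < r := by linarith [(Nat.cast_nonneg t : (0 : ℝ) ≤ t)]
  exact div_pos (by linarith) (by positivity)

theorem escapeProb_le_one {r : ℕ} {μ₀ : ℝ} (hr : 0 < r) (hμ : 1 ≤ μ₀) (t : ℕ) :
    escapeProb r μ₀ t ≤ 1 := by
  have : (0 : ℝ) < r := by exact_mod_cast hr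
  rw [escapeProb, div_le_one (by positivity)]
  nlinarith [(Nat.cast_nonneg t : (0 : ℝ) ≤ t)]

end Coherence

section Residual

variable {d r m : ℕ}

theorem projResidSq_nonneg (U : Matrix (Fin d) (Fin r) ℝ) (y : Fin d → ℝ) (Ω : Fin m → Fin d) :
    0 ≤ projResidSq U y Ω := by
  unfold projResidSq
  positivity

theorem exists_mulVec_eq_of_projResidSq_eq_zero {U : Matrix (Fin d) (Fin r) ℝ} {y : Fin d → ℝ}
    {Ω : Fin m → Fin d} (h : projResidSq U y Ω = 0) :
    ∃ b, ∀ j, y (Ω j) = (U *ᵥ b) (Ω j) := by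
  rw [projResidSq, sq_eq_zero_iff, norm_eq_zero, sub_eq_zero] at h
  obtain ⟨b, hb⟩ := (Submodule.mem_span_range_iff_exists_fun ℝ).mp
    (Submodule.starProjection_eq_self_iff.mp h.symm)
  refine ⟨b, fun j => ?_⟩
  simpa [Matrix.mulVec, dotProduct, mul_comm] using (congrArg (· j) hb).symm

theorem eq_zero_of_sampleSpan_eq_top {U : Matrix (Fin d) (Fin r) ℝ} {Ω : Fin m → Fin d}
    (hΩ : sampleSpan ℝ (euclideanRow U) Ω = ⊤) {a : Fin r → ℝ}
    (ha : ∀ j, (U *ᵥ a) (Ω j) = 0) : a = 0 := by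
  have hperp : innerₛₗ ℝ (WithLp.toLp 2 a) = 0 :=
    LinearMap.ext_on_range hΩ fun j => by
      simp [real_inner_comm, inner_euclideanRow, ha]
  simpa using congrArg (· (WithLp.toLp 2 a)) hperp

theorem sampleSpan_ne_top_of_projResidSq_eq_zero {r' : ℕ} {U : Matrix (Fin d) (Fin r) ℝ}
    {Ut : Matrix (Fin d) (Fin r') ℝ} {C : Matrix (Fin r) (Fin r') ℝ} (hsub : Ut = U * C)
    {x : Fin d → ℝ} {c : Fin r → ℝ} (hx : x = U *ᵥ c) (hnot : ¬∃ c', x = Ut *ᵥ c')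
    {Ω : Fin m → Fin d} (h : projResidSq Ut x Ω = 0) :
    sampleSpan ℝ (euclideanRow U) Ω ≠ ⊤ := by
  intro hΩ
  obtain ⟨b, hb⟩ := exists_mulVec_eq_of_projResidSq_eq_zero h
  have hcb : C *ᵥ b - c = 0 := eq_zero_of_sampleSpan_eq_top hΩ fun j => by
    simp [Matrix.mulVec_sub, Matrix.mulVec_mulVec, ← hsub, ← hx, hb]
  exact hnot ⟨b, by rw [hx, ← sub_eq_zero.mp hcb, hsub, Matrix.mulVec_mulVec]⟩

end Residual

section Numerics

open Real

theorem one_sub_pow_ceil_div_le {q : ℝ} (T : ℝ) (hq₀ : 0 < q) (hq₁ : q ≤ 1) :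
    (1 - q) ^ ⌈T / q⌉₊ ≤ exp (-T) := by
  calc (1 - q) ^ ⌈T / q⌉₊ ≤ exp (-q) ^ ⌈T / q⌉₊ :=
        pow_le_pow_left₀ (by linarith) (one_sub_le_exp_neg q) _
    _ = exp (-(q * ⌈T / q⌉₊)) := by rw [← exp_nat_mul]; ring_nf
    _ ≤ exp (-T) := by
        gcongr
        calc T = q * (T / q) := by field_simp
          _ ≤ q * ⌈T / q⌉₊ := by gcongr; exact Nat.le_ceil _

theorem one_sub_escapeProb_pow_ceil_le {r t : ℕ} {μ₀ δ : ℝ} (hμ : 1 ≤ μ₀) (hδ : 0 < δ)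
    (ht : t < r) :
    (1 - escapeProb r μ₀ t) ^ ⌈log (r / (4 * δ)) / escapeProb r μ₀ t⌉₊ ≤ 4 * δ / r := by
  have hr : (0 : ℝ) < r := by exact_mod_cast (Nat.zero_le t).trans_lt ht
  calc _ ≤ exp (-log (r / (4 * δ))) := one_sub_pow_ceil_div_le _
        (escapeProb_pos (by linarith) ht) (escapeProb_le_one (by omega) hμ t)
    _ = 4 * δ / r := by rw [exp_neg, exp_log (by positivity), inv_div]

theorem sum_one_sub_escapeProb_pow_ceil_le {r : ℕ} {μ₀ δ : ℝ} (hr : 0 < r) (hμ : 1 ≤ μ₀)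
    (hδ : 0 < δ) :
    ∑ t ∈ Finset.range r,
      (1 - escapeProb r μ₀ t) ^ ⌈log (r / (4 * δ)) / escapeProb r μ₀ t⌉₊ ≤ 4 * δ :=
  calc _ ≤ ∑ _t ∈ Finset.range r, 4 * δ / r := Finset.sum_le_sum fun t ht =>
        one_sub_escapeProb_pow_ceil_le hμ hδ (Finset.mem_range.mp ht)
    _ = 4 * δ := by
        rw [Finset.sum_const, Finset.card_range, nsmul_eq_mul]
        field_simp

theorem sum_range_inv_sub_eq_harmonic (r : ℕ) :
    ∑ t ∈ Finset.range r, ((r : ℝ) - t)⁻¹ = harmonic r := by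
  rw [← Finset.sum_range_reflect, harmonic]
  push_cast
  refine Finset.sum_congr rfl fun t ht => ?_
  rw [Finset.mem_range] at ht
  rw [Nat.sub_sub, Nat.cast_sub (by omega)]
  push_cast
  ring_nf

theorem two_lt_log_eight : 2 < log 8 := by
  rw [lt_log_iff_exp_lt (by norm_num), show (2 : ℝ) = 1 + 1 by norm_num, exp_add]
  nlinarith [exp_one_lt_d9, exp_pos 1]

theorem sum_ceil_div_escapeProb_le {r : ℕ} {μ₀ δ : ℝ} (hr : 0 < r) (hμ : 1 ≤ μ₀) (hδ : 0 < δ)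
    (hδ4 : δ < 1 / 4) :
    ∑ t ∈ Finset.range r, (⌈log (r / (4 * δ)) / escapeProb r μ₀ t⌉₊ : ℝ)
      ≤ 32 * r * μ₀ * log (2 * r / δ) ^ 2 := by
  set T := log (r / (4 * δ))
  set Λ := log (2 * r / δ)
  have hr1 : (1 : ℝ) ≤ r := by exact_mod_cast hr
  have hT : 0 ≤ T := log_nonneg (by rw [le_div_iff₀ (by positivity)]; nlinarith)
  have hTΛ : T ≤ Λ := log_le_log (by positivity) (by
    rw [div_le_div_iff₀ (by positivity) hδ]; nlinarith)
  have hlogr : log r ≤ Λ := log_le_log (by positivity) (by rw [le_div_iff₀ hδ]; nlinarith)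
  have hΛ : 2 < Λ := two_lt_log_eight.trans_le
    (log_le_log (by norm_num) (by rw [le_div_iff₀ hδ]; nlinarith))
  have hceil (t : ℕ) (ht : t ∈ Finset.range r) :
      (⌈T / escapeProb r μ₀ t⌉₊ : ℝ) ≤ r * μ₀ * T * ((r : ℝ) - t)⁻¹ + 1 := by
    have ht' : (t : ℝ) < r := by exact_mod_cast Finset.mem_range.mp ht
    have hq : T / escapeProb r μ₀ t = r * μ₀ * T * ((r : ℝ) - t)⁻¹ := by
      rw [escapeProb, div_div_eq_mul_div]
      field_simp
    rw [← hq]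
    exact (Nat.ceil_lt_add_one (div_nonneg hT (escapeProb_pos (by linarith)
      (Finset.mem_range.mp ht)).le)).le
  calc ∑ t ∈ Finset.range r, (⌈T / escapeProb r μ₀ t⌉₊ : ℝ)
      ≤ ∑ t ∈ Finset.range r, (r * μ₀ * T * ((r : ℝ) - t)⁻¹ + 1) := Finset.sum_le_sum hceil
    _ = r * μ₀ * T * harmonic r + r := by
        rw [Finset.sum_add_distrib, ← Finset.mul_sum, sum_range_inv_sub_eq_harmonic]
        simp
    _ ≤ r * μ₀ * Λ * (1 + Λ) + r * μ₀ * Λ ^ 2 / 4 := by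
        have hH : (harmonic r : ℝ) ≤ 1 + Λ := (harmonic_le_one_add_log r).trans (by linarith)
        have hr4 : (r : ℝ) ≤ r * μ₀ * Λ ^ 2 / 4 := by
          have hμΛ : (4 : ℝ) ≤ μ₀ * Λ ^ 2 := by nlinarith
          rw [le_div_iff₀ (by norm_num), mul_assoc]
          nlinarith
        have hH0 : (0 : ℝ) ≤ harmonic r := by exact_mod_cast (harmonic_pos hr.ne').le
        exact add_le_add (mul_le_mul (by gcongr) hH hH0 (by positivity)) hr4
    _ ≤ 32 * r * μ₀ * Λ ^ 2 := by
        have hA : (0 : ℝ) ≤ r * μ₀ := by positivity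
        have hΛsq : Λ ≤ Λ ^ 2 := by nlinarith
        nlinarith [mul_le_mul_of_nonneg_left hΛsq hA, mul_nonneg hA (sq_nonneg Λ)]

end Numerics

theorem new_direction_detected_general
    {d r r' m : ℕ} (μ₀ δ : ℝ) (hδ : 0 < δ)
    (U : Matrix (Fin d) (Fin r) ℝ) (hU : Uᵀ * U = 1) (hcoh : matCoh U ≤ μ₀)
    (Ut : Matrix (Fin d) (Fin r') ℝ)
    (C : Matrix (Fin r) (Fin r') ℝ) (hsub : Ut = U * C)
    (x : Fin d → ℝ) (c : Fin r → ℝ) (hx : x = U.mulVec c)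
    (hnot : ¬ ∃ c' : Fin r' → ℝ, x = Ut.mulVec c')
    (hm : (m : ℝ) ≥ 32 * r * μ₀ * (Real.log (2 * r / δ)) ^ 2) :
    unifProb (fun Ω : Fin m → Fin d => 0 < projResidSq Ut x Ω) ≥ 1 - 4 * δ := by
  obtain hδ4 | hδ4 := le_or_gt (1 / 4 : ℝ) δ
  · linarith [unifProb_nonneg fun Ω : Fin m → Fin d => 0 < projResidSq Ut x Ω]
  have hd : 0 < d := Nat.pos_of_ne_zero fun hd => hnot ⟨0, by
    subst hd
    exact Subsingleton.elim _ _⟩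
  have hr : 0 < r := Nat.pos_of_ne_zero fun hr => hnot ⟨0, by
    subst hr
    simp [hx, Subsingleton.elim c 0]⟩
  have : Nonempty (Fin d) := ⟨⟨0, hd⟩⟩
  have hμ := one_le_of_matCoh_le hd hr hU hcoh
  let L t := ⌈Real.log (r / (4 * δ)) / escapeProb r μ₀ t⌉₊
  have hL : ∑ t ∈ Finset.range r, L t ≤ m := by
    exact_mod_cast (sum_ceil_div_escapeProb_le hr hμ hδ hδ4).trans hm
  have hfail : unifProb (fun Ω : Fin m → Fin d => ¬0 < projResidSq Ut x Ω)
      ≤ lowRankProb ℝ (euclideanRow U) m r :=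
    unifProb_mono fun Ω hΩ => (Submodule.finrank_lt (sampleSpan_ne_top_of_projResidSq_eq_zero
      hsub hx hnot ((not_lt.mp hΩ).antisymm (projResidSq_nonneg _ _ _)))).trans_eq
      finrank_euclideanSpace_fin
  have hlow := lowRankProb_le_sum (euclideanRow U)
    (fun _ _ W hW => hW ▸ escapeProb_le_unifProb hd hr hU hcoh W)
    (fun t ht => (escapeProb_pos (by linarith) ht).le) (fun t _ => escapeProb_le_one hr hμ t) L hL
  linarith [unifProb_not fun Ω : Fin m → Fin d => 0 < projResidSq Ut x Ω,
    sum_one_sub_escapeProb_pow_ceil_le hr hμ hδ]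

/-- Corollary 1 (detection of a new direction): let U be an r-dimensional subspace of ℝ^d with
coherence at most μ₀ (U given by a matrix with orthonormal columns), Ũ a subspace of U (given by
an orthonormal matrix Ut = U·C), and x ∈ U with x ∉ Ũ.  If Ω is a list of
m ≥ 32·r·μ₀·log²(2r/δ) indices drawn i.i.d. uniformly from [d], then with probability at least
1 − 4δ we have ‖x_Ω − P_{Ũ_Ω} x_Ω‖₂ > 0. -/
theorem new_direction_detected
    {d r r' m : ℕ} (μ₀ δ : ℝ) (hδ : 0 < δ)
    (U : Matrix (Fin d) (Fin r) ℝ) (hU : Uᵀ * U = 1) (hcoh : matCoh U ≤ μ₀)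
    (Ut : Matrix (Fin d) (Fin r') ℝ) (hUt : Utᵀ * Ut = 1)
    (C : Matrix (Fin r) (Fin r') ℝ) (hsub : Ut = U * C)
    (x : Fin d → ℝ) (c : Fin r → ℝ) (hx : x = U.mulVec c)
    (hnot : ¬ ∃ c' : Fin r' → ℝ, x = Ut.mulVec c')
    (hm : (m : ℝ) ≥ 32 * r * μ₀ * (Real.log (2 * r / δ)) ^ 2) :
    unifProb (fun Ω : Fin m → Fin d => 0 < projResidSq Ut x Ω) ≥ 1 - 4 * δ :=
  new_direction_detected_general μ₀ δ hδ U hU hcoh Ut C hsub x c hx hnot hm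
end

section
/- Let A and N be real d×n matrices and write Â = A + N. Then for every k ≥ 1: ‖A − Â_k‖₂ ≤ ‖A − A_k‖₂ + 2‖N_k‖₂, where M_k denotes the best rank-k approximation of a matrix M. -/
open Matrix

/-- Frobenius norm of a matrix. -/
noncomputable def frobNorm {p q : ℕ} (M : Matrix (Fin p) (Fin q) ℝ) : ℝ :=
  Real.sqrt (∑ i, ∑ j, M i j ^ 2)

/-- The d×n rectangular "diagonal" matrix with entries s 0 ≥ s 1 ≥ … on the diagonal. -/
def diagDec (d n : ℕ) (s : ℕ → ℝ) : Matrix (Fin d) (Fin n) ℝ :=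
  Matrix.of fun i j => if (i : ℕ) = (j : ℕ) then s i else 0

/-- The same diagonal matrix truncated to its first k diagonal entries. -/
def diagTrunc (d n : ℕ) (s : ℕ → ℝ) (k : ℕ) : Matrix (Fin d) (Fin n) ℝ :=
  Matrix.of fun i j => if (i : ℕ) = (j : ℕ) ∧ (i : ℕ) < k then s i else 0

/-- A singular value decomposition M = U·Σ·Vᵀ of a d×n real matrix M: U and V are orthogonal
and the diagonal entries of Σ are the singular values σ₁ ≥ σ₂ ≥ … ≥ 0.  Every real matrix
admits such a decomposition. -/
structure SVDData (d n : ℕ) (M : Matrix (Fin d) (Fin n) ℝ) where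
  U : Matrix (Fin d) (Fin d) ℝ
  V : Matrix (Fin n) (Fin n) ℝ
  s : ℕ → ℝ
  orthU : Uᵀ * U = 1
  orthV : Vᵀ * V = 1
  nonneg : ∀ i, 0 ≤ s i
  anti : ∀ i j, i ≤ j → s j ≤ s i
  eq : M = U * diagDec d n s * Vᵀ

/-- The best rank-k approximation M_k of M: the truncated SVD keeping the top k singular
values. -/
def SVDData.trunc {d n : ℕ} {M : Matrix (Fin d) (Fin n) ℝ} (sd : SVDData d n M) (k : ℕ) :
    Matrix (Fin d) (Fin n) ℝ :=
  sd.U * diagTrunc d n sd.s k * sd.Vᵀ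

open scoped Matrix.Norms.L2Operator

/-!
Write `Â = Â_k + R` with `‖R‖ = σ_{k+1}(Â)`. Then `‖A - Â_k‖ ≤ ‖N‖ + σ_{k+1}(Â)`, and by the
Eckart–Young lower bound `σ_{k+1}(Â) ≤ ‖Â - A_k‖ ≤ ‖A - A_k‖ + ‖N‖`, since `A_k` has rank at most
`k`. Finally `‖N‖ = σ₁(N) = ‖N_k‖` as `k ≥ 1`.

For the lower bound `σ_{k+1}(Σ) ≤ ‖Σ - C‖` (`rank C ≤ k`, `Σ` rectangular diagonal) compress both
matrices to their leading `(k+1) × (k+1)` blocks, which does not increase the norm. There `Σ`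
becomes `diagonal (σ₁, …, σ_{k+1})` and the compression of `C` is singular, so it kills some
`z ≠ 0`, and `‖(Σ - C) z‖ = ‖Σ z‖ ≥ σ_{k+1} ‖z‖`.
-/

namespace Matrix

variable {m n : Type*} [Fintype m] [Fintype n] [DecidableEq m] [DecidableEq n]

theorem l2_opNorm_transpose (A : Matrix m n ℝ) : ‖Aᵀ‖ = ‖A‖ := by
  rw [← conjTranspose_eq_transpose_of_trivial, l2_opNorm_conjTranspose]

omit [DecidableEq m] in
theorem l2_opNorm_le_one_of_transpose_mul_self_eq_one {U : Matrix m n ℝ}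
    (hU : Uᵀ * U = 1) : ‖U‖ ≤ 1 := by
  have h1 : ‖(1 : Matrix n n ℝ)‖ ≤ 1 := by
    rw [← diagonal_one, l2_opNorm_diagonal]
    exact (pi_norm_le_iff_of_nonneg zero_le_one).mpr fun _ => norm_one.le
  have h2 : ‖U‖ * ‖U‖ ≤ 1 := by
    rwa [← l2_opNorm_conjTranspose_mul_self, conjTranspose_eq_transpose_of_trivial, hU]
  nlinarith [norm_nonneg U]

theorem l2_opNorm_mul_mul_le {p q : Type*} [Fintype p] [Fintype q] [DecidableEq q]
    {A : Matrix p m ℝ} {B : Matrix n q ℝ} (hA : ‖A‖ ≤ 1) (hB : ‖B‖ ≤ 1) (X : Matrix m n ℝ) :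
    ‖A * X * B‖ ≤ ‖X‖ :=
  calc ‖A * X * B‖ ≤ ‖A‖ * ‖X‖ * ‖B‖ :=
        (l2_opNorm_mul _ _).trans (by gcongr; exact l2_opNorm_mul _ _)
    _ ≤ 1 * ‖X‖ * 1 := by gcongr
    _ = ‖X‖ := by ring

theorem transpose_mul_mul_mul_cancel {U : Matrix m m ℝ} {V : Matrix n n ℝ} (hU : Uᵀ * U = 1)
    (hV : Vᵀ * V = 1) (X : Matrix m n ℝ) : Uᵀ * (U * X * Vᵀ) * V = X := by
  rw [Matrix.mul_assoc, Matrix.mul_assoc, hV, Matrix.mul_one, ← Matrix.mul_assoc, hU,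
    Matrix.one_mul]

theorem l2_opNorm_orthogonal_mul_mul_transpose
    {U : Matrix m m ℝ} {V : Matrix n n ℝ} (hU : Uᵀ * U = 1) (hV : Vᵀ * V = 1)
    (M : Matrix m n ℝ) : ‖U * M * Vᵀ‖ = ‖M‖ := by
  have hU₁ : ‖U‖ ≤ 1 := l2_opNorm_le_one_of_transpose_mul_self_eq_one hU
  have hV₁ : ‖V‖ ≤ 1 := l2_opNorm_le_one_of_transpose_mul_self_eq_one hV
  refine le_antisymm (l2_opNorm_mul_mul_le hU₁ (by rwa [l2_opNorm_transpose]) M) ?_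
  calc ‖M‖ = ‖Uᵀ * (U * M * Vᵀ) * V‖ := by rw [transpose_mul_mul_mul_cancel hU hV]
    _ ≤ ‖U * M * Vᵀ‖ := l2_opNorm_mul_mul_le (by rwa [l2_opNorm_transpose]) hV₁ _

theorem le_l2_opNorm_diagonal_sub {σ : n → ℝ} {c : ℝ} (hσ : ∀ i, c ≤ |σ i|) {C : Matrix n n ℝ}
    (hC : C.rank < Fintype.card n) : c ≤ ‖diagonal σ - C‖ := by
  rcases lt_or_ge c 0 with hc | hc
  · exact hc.le.trans (norm_nonneg _)
  obtain ⟨z, hz, hCz⟩ : ∃ z ≠ 0, C *ᵥ z = 0 := by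
    refine exists_mulVec_eq_zero_iff.mpr (by_contra fun hdet => hC.ne ?_)
    exact rank_of_isUnit C ((isUnit_iff_isUnit_det C).mpr (isUnit_iff_ne_zero.mpr hdet))
  set x : EuclideanSpace ℝ n := WithLp.toLp 2 z
  have hx : 0 < ‖x‖ := norm_pos_iff.mpr (by simpa [x] using hz)
  have hlower : c * ‖x‖ ≤ ‖(EuclideanSpace.equiv n ℝ).symm ((diagonal σ - C) *ᵥ x)‖ := by
    refine (sq_le_sq₀ (by positivity) (by positivity)).mp ?_
    rw [mul_pow, EuclideanSpace.norm_sq_eq, EuclideanSpace.norm_sq_eq, Finset.mul_sum]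
    refine Finset.sum_le_sum fun i _ => ?_
    simp only [x, Real.norm_eq_abs, sq_abs, sub_mulVec, hCz, sub_zero,
      PiLp.continuousLinearEquiv_symm_apply, mulVec_diagonal, mul_pow]
    exact mul_le_mul_of_nonneg_right ((pow_le_pow_left₀ hc (hσ i) 2).trans_eq (sq_abs _))
      (sq_nonneg _)
  exact le_of_mul_le_mul_right (hlower.trans (l2_opNorm_mulVec _ x)) hx

end Matrix

section RectangularDiagonal

variable {d m n : ℕ}

theorem diagDec_transpose (s : ℕ → ℝ) : (diagDec d n s)ᵀ = diagDec n d s := by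
  ext i j
  by_cases h : (i : ℕ) = j
  · simp [diagDec, h]
  · simp [diagDec, h, Ne.symm h]

theorem diagDec_eq_diagonal (s : ℕ → ℝ) : diagDec n n s = diagonal fun i : Fin n => s i := by
  ext i j
  by_cases h : i = j <;> simp [diagDec, diagonal, h, Fin.val_eq_val]

theorem diagDec_mul_diagDec (s t : ℕ → ℝ) :
    diagDec d m s * diagDec m n t = diagTrunc d n (s * t) m := by
  ext i j
  simp only [diagDec, diagTrunc, mul_apply, of_apply, Pi.mul_apply]
  by_cases him : (i : ℕ) < m
  · rw [Finset.sum_eq_single ⟨i, him⟩]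
    · by_cases hij : (i : ℕ) = j
      · simp [hij, hij ▸ him]
      · simp [hij]
    · intro l _ hl
      rw [if_neg (fun h => hl (Fin.ext h.symm)), zero_mul]
    · simp
  · rw [Finset.sum_eq_zero, if_neg (fun h => him h.2)]
    intro l _
    rw [if_neg (by intro h; have := l.isLt; omega), zero_mul]

theorem diagTrunc_eq_diagDec_of_le (s : ℕ → ℝ) {k : ℕ} (h : d ≤ k ∨ n ≤ k) :
    diagTrunc d n s k = diagDec d n s := by
  ext i j
  have := i.isLt; have := j.isLt
  by_cases hij : (i : ℕ) = j
  · simp [diagTrunc, diagDec, hij]; omega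
  · simp [diagTrunc, diagDec, hij]

theorem diagTrunc_eq_diagDec (s : ℕ → ℝ) (k : ℕ) :
    diagTrunc d n s k = diagDec d n fun i => if i < k then s i else 0 := by
  ext i j
  by_cases hij : (i : ℕ) = j <;> by_cases hik : (i : ℕ) < k <;>
    simp [diagTrunc, diagDec, hij, hik]

theorem diagDec_sub_diagTrunc (s : ℕ → ℝ) (k : ℕ) :
    diagDec d n s - diagTrunc d n s k = diagDec d n fun i => if i < k then 0 else s i := by
  ext i j
  by_cases hij : (i : ℕ) = j <;> by_cases hik : (j : ℕ) < k <;>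
    simp [diagTrunc, diagDec, hij, hik]

theorem rank_diagTrunc_le (s : ℕ → ℝ) (k : ℕ) : (diagTrunc d n s k).rank ≤ k := by
  rw [← mul_one s, ← diagDec_mul_diagDec]
  exact (rank_mul_le_right _ _).trans (rank_le_height _)

theorem l2_opNorm_diagDec_one_le : ‖diagDec d n 1‖ ≤ 1 := by
  have key : ∀ {d n : ℕ}, n ≤ d → ‖diagDec d n 1‖ ≤ 1 := fun h => by
    refine l2_opNorm_le_one_of_transpose_mul_self_eq_one ?_
    rw [diagDec_transpose, diagDec_mul_diagDec, diagTrunc_eq_diagDec_of_le _ (.inl h),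
      diagDec_eq_diagonal, mul_one]
    exact diagonal_one
  rcases le_total n d with h | h
  · exact key h
  · rw [← l2_opNorm_transpose, diagDec_transpose]; exact key h

theorem l2_opNorm_diagDec_le (s : ℕ → ℝ) {c : ℝ} (hc : ∀ i, |s i| ≤ c) :
    ‖diagDec d n s‖ ≤ c := by
  have hfactor : diagDec d n s = diagonal (fun i : Fin d => s i) * diagDec d n 1 := by
    rw [← diagDec_eq_diagonal, diagDec_mul_diagDec, mul_one, diagTrunc_eq_diagDec_of_le _ (.inl le_rfl)]
  have hc₀ : 0 ≤ c := (abs_nonneg _).trans (hc 0)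
  calc ‖diagDec d n s‖ ≤ ‖diagonal (fun i : Fin d => s i)‖ * ‖diagDec d n 1‖ :=
        hfactor ▸ l2_opNorm_mul _ _
    _ ≤ c * 1 := by
        gcongr
        · rw [l2_opNorm_diagonal]
          exact (pi_norm_le_iff_of_nonneg hc₀).mpr fun i => (Real.norm_eq_abs _).trans_le (hc i)
        · exact l2_opNorm_diagDec_one_le
    _ = c := mul_one c

theorem le_l2_opNorm_diagDec_sub {k : ℕ} (hkd : k < d) (hkn : k < n) {s : ℕ → ℝ} {c : ℝ}
    (hs : ∀ i ≤ k, c ≤ |s i|) {C : Matrix (Fin d) (Fin n) ℝ} (hC : C.rank ≤ k) :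
    c ≤ ‖diagDec d n s - C‖ := by
  set P := diagDec (k + 1) d 1
  set Q := diagDec n (k + 1) 1
  have hcompress : P * diagDec d n s * Q = diagonal fun i : Fin (k + 1) => s i := by
    rw [diagDec_mul_diagDec, diagTrunc_eq_diagDec_of_le _ (.inl (by omega)), diagDec_mul_diagDec,
      diagTrunc_eq_diagDec_of_le _ (.inl (by omega)), one_mul, mul_one, diagDec_eq_diagonal]
  calc c ≤ ‖diagonal (fun i : Fin (k + 1) => s i) - P * C * Q‖ := by
        refine le_l2_opNorm_diagonal_sub
          (fun i : Fin (k + 1) => hs i (Nat.lt_succ_iff.mp i.isLt)) ?_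
        rw [Fintype.card_fin]
        exact Nat.lt_succ_of_le (((rank_mul_le_left _ _).trans (rank_mul_le_right _ _)).trans hC)
    _ = ‖P * (diagDec d n s - C) * Q‖ := by rw [← hcompress, Matrix.mul_sub, Matrix.sub_mul]
    _ ≤ ‖diagDec d n s - C‖ :=
        l2_opNorm_mul_mul_le l2_opNorm_diagDec_one_le l2_opNorm_diagDec_one_le _

end RectangularDiagonal

namespace SVDData

variable {d n : ℕ} {M : Matrix (Fin d) (Fin n) ℝ} (sd : SVDData d n M)

theorem l2_opNorm_eq : ‖M‖ = ‖diagDec d n sd.s‖ := by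
  conv_lhs => rw [sd.eq]
  exact l2_opNorm_orthogonal_mul_mul_transpose sd.orthU sd.orthV _

theorem trunc_eq_self {k : ℕ} (h : d ≤ k ∨ n ≤ k) : sd.trunc k = M := by
  rw [trunc, diagTrunc_eq_diagDec_of_le _ h, ← sd.eq]

theorem rank_trunc_le (k : ℕ) : (sd.trunc k).rank ≤ k :=
  (rank_mul_le_left _ _).trans ((rank_mul_le_right _ _).trans (rank_diagTrunc_le _ _))

theorem l2_opNorm_sub_trunc_le (k : ℕ) : ‖M - sd.trunc k‖ ≤ sd.s k := by
  have hsub : M - sd.trunc k = sd.U * (diagDec d n sd.s - diagTrunc d n sd.s k) * sd.Vᵀ := by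
    nth_rewrite 1 [sd.eq]
    rw [trunc, Matrix.mul_sub, Matrix.sub_mul]
  rw [hsub, l2_opNorm_orthogonal_mul_mul_transpose sd.orthU sd.orthV, diagDec_sub_diagTrunc]
  refine l2_opNorm_diagDec_le _ fun i => ?_
  split_ifs with hik
  · simpa using sd.nonneg k
  · rw [abs_of_nonneg (sd.nonneg i)]
    exact sd.anti k i (not_lt.mp hik)

theorem le_l2_opNorm_sub {k : ℕ} (hkd : k < d) (hkn : k < n) {B : Matrix (Fin d) (Fin n) ℝ}
    (hB : B.rank ≤ k) : sd.s k ≤ ‖M - B‖ := by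
  have hUt : sd.Uᵀᵀ * sd.Uᵀ = 1 := by rw [transpose_transpose, mul_eq_one_comm, sd.orthU]
  have hVt : sd.Vᵀᵀ * sd.Vᵀ = 1 := by rw [transpose_transpose, mul_eq_one_comm, sd.orthV]
  have hrotate : sd.Uᵀ * (M - B) * sd.Vᵀᵀ = diagDec d n sd.s - sd.Uᵀ * B * sd.V := by
    have hdiag : sd.Uᵀ * M * sd.V = diagDec d n sd.s := by
      calc sd.Uᵀ * M * sd.V = sd.Uᵀ * (sd.U * diagDec d n sd.s * sd.Vᵀ) * sd.V := by
            rw [← sd.eq]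
        _ = diagDec d n sd.s := transpose_mul_mul_mul_cancel sd.orthU sd.orthV _
    rw [transpose_transpose, Matrix.mul_sub, Matrix.sub_mul, hdiag]
  rw [← l2_opNorm_orthogonal_mul_mul_transpose hUt hVt, hrotate]
  refine le_l2_opNorm_diagDec_sub hkd hkn (fun i hi => ?_) ?_
  · rw [abs_of_nonneg (sd.nonneg i)]
    exact sd.anti i k hi
  · exact ((rank_mul_le_left _ _).trans (rank_mul_le_right _ _)).trans hB

/-- Eckart–Young in the spectral norm. For `k ≥ min d n` the value `sd.s k` is unconstrained,
but then the truncation is exact. -/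
theorem l2_opNorm_sub_trunc_le_of_rank_le {k : ℕ} {B : Matrix (Fin d) (Fin n) ℝ}
    (hB : B.rank ≤ k) : ‖M - sd.trunc k‖ ≤ ‖M - B‖ := by
  by_cases h : k < d ∧ k < n
  · exact (sd.l2_opNorm_sub_trunc_le k).trans (sd.le_l2_opNorm_sub h.1 h.2 hB)
  · rw [sd.trunc_eq_self (by omega), sub_self, norm_zero]
    exact norm_nonneg _

theorem l2_opNorm_le_l2_opNorm_trunc {k : ℕ} (hk : 1 ≤ k) : ‖M‖ ≤ ‖sd.trunc k‖ := by
  by_cases h : 0 < d ∧ 0 < n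
  · have hM : ‖M‖ ≤ sd.s 0 := by
      rw [sd.l2_opNorm_eq]
      refine l2_opNorm_diagDec_le _ fun i => ?_
      rw [abs_of_nonneg (sd.nonneg i)]
      exact sd.anti 0 i i.zero_le
    have htrunc : sd.s 0 ≤ ‖sd.trunc k‖ := by
      rw [trunc, l2_opNorm_orthogonal_mul_mul_transpose sd.orthU sd.orthV, diagTrunc_eq_diagDec,
        ← sub_zero (diagDec _ _ _)]
      refine le_l2_opNorm_diagDec_sub h.1 h.2 (fun i hi => ?_) (by rw [rank_zero])
      rw [Nat.le_zero.mp hi, if_pos (by omega), abs_of_nonneg (sd.nonneg 0)]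
    exact hM.trans htrunc
  · rw [sd.trunc_eq_self (by omega)]

end SVDData

theorem specNorm_eq_l2_opNorm {p q : ℕ} (M : Matrix (Fin p) (Fin q) ℝ) : specNorm M = ‖M‖ := rfl

/-- Achlioptas–McSherry, spectral-norm version: for real d×n matrices A, N with Â = A + N and
every k ≥ 1 (M_k denoting the truncated SVD of M, for any SVDs of Â, A and N):
‖A − Â_k‖₂ ≤ ‖A − A_k‖₂ + 2‖N_k‖₂. -/
theorem achlioptas_mcsherry_spectral
    {d n : ℕ} (A N Ahat : Matrix (Fin d) (Fin n) ℝ) (hAhat : Ahat = A + N)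
    (k : ℕ) (hk : 1 ≤ k)
    (sA : SVDData d n A) (sN : SVDData d n N) (sAhat : SVDData d n Ahat) :
    specNorm (A - sAhat.trunc k) ≤ specNorm (A - sA.trunc k) + 2 * specNorm (sN.trunc k) := by
  simp only [specNorm_eq_l2_opNorm]
  have hnoise : ‖A - Ahat‖ = ‖N‖ := by rw [hAhat, sub_add_cancel_left, norm_neg]
  have hEckartYoung : ‖Ahat - sAhat.trunc k‖ ≤ ‖Ahat - sA.trunc k‖ :=
    sAhat.l2_opNorm_sub_trunc_le_of_rank_le (sA.rank_trunc_le k)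
  have hshift : ‖Ahat - sA.trunc k‖ ≤ ‖A - sA.trunc k‖ + ‖N‖ := by
    rw [hAhat, add_sub_right_comm]
    exact norm_add_le _ _
  have htop : ‖N‖ ≤ ‖sN.trunc k‖ := sN.l2_opNorm_le_l2_opNorm_trunc hk
  calc ‖A - sAhat.trunc k‖ ≤ ‖A - Ahat‖ + ‖Ahat - sAhat.trunc k‖ :=
        norm_sub_le_norm_sub_add_norm_sub _ _ _
    _ ≤ ‖A - sA.trunc k‖ + 2 * ‖sN.trunc k‖ := by linarith
end

section
/- Let A and N be real d×n matrices and write Â = A + N. Then for every k ≥ 1: ‖A − Â_k‖_F ≤ ‖A − A_k‖_F + ‖N_k‖_F + 2·sqrt(‖N_k‖_F·‖A_k‖_F), where M_k denotes the best rank-k approximation of a matrix M. -/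
open Matrix

/-!
Write `Â = A + N`, `a = ‖A - A_k‖`, `b = ‖N_k‖`, `c = ‖A_k‖`. Eckart–Young,
`‖Â - Â_k‖ ≤ ‖Â - A_k‖`, expanded around `A` gives `‖A - Â_k‖² ≤ a² + 2⟨Â_k - A_k, N⟩`.
A matrix `Y` of rank at most `k` satisfies `|⟨Y, M⟩| ≤ ‖Y‖ ‖M_k‖` (Ky Fan); this bounds the
cross term by `2b (‖Â_k‖ + c)` and, applied to `‖Â_k‖² = ⟨Â_k, A⟩ + ⟨Â_k, N⟩`, gives
`‖Â_k‖ ≤ c + b`. Hence `‖A - Â_k‖² ≤ a² + 2b² + 4bc`, which is enough when `b ≤ c`; when `c ≤ b`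
the triangle inequality `‖A - Â_k‖ ≤ a + c + ‖Â_k‖ ≤ a + b + 2c` suffices.

Eckart–Young and the Ky Fan bound both reduce to `‖M Q‖ ≤ ‖M_k‖` for an orthogonal projection
`Q` of trace at most `k`: in the right singular basis `‖M Q‖² = ∑ σ_j² Q'_jj` with
`0 ≤ Q'_jj ≤ 1` and `∑ Q'_jj ≤ k`.
-/

section Frobenius

variable {p q : ℕ}

def frobVec : Matrix (Fin p) (Fin q) ℝ →ₗ[ℝ] EuclideanSpace ℝ (Fin p × Fin q) where
  toFun M := WithLp.toLp 2 (Function.uncurry M)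
  map_add' _ _ := rfl
  map_smul' _ _ := rfl

@[simp]
theorem frobVec_apply (M : Matrix (Fin p) (Fin q) ℝ) (ij : Fin p × Fin q) :
    frobVec M ij = M ij.1 ij.2 := rfl

theorem frobNorm_eq_norm_frobVec (M : Matrix (Fin p) (Fin q) ℝ) :
    frobNorm M = ‖frobVec M‖ := by
  simp [frobNorm, EuclideanSpace.norm_eq, Fintype.sum_prod_type]

theorem inner_frobVec (X Y : Matrix (Fin p) (Fin q) ℝ) :
    inner ℝ (frobVec X) (frobVec Y) = trace (Xᵀ * Y) := by
  simp only [EuclideanSpace.inner_eq_star_dotProduct, dotProduct, frobVec_apply, star_trivial,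
    Fintype.sum_prod_type, trace, diag_apply, mul_apply, transpose_apply, mul_comm]
  exact Finset.sum_comm

theorem frobNorm_nonneg (M : Matrix (Fin p) (Fin q) ℝ) : 0 ≤ frobNorm M :=
  Real.sqrt_nonneg _

theorem frobNorm_sq (M : Matrix (Fin p) (Fin q) ℝ) : frobNorm M ^ 2 = trace (Mᵀ * M) := by
  rw [frobNorm_eq_norm_frobVec, ← real_inner_self_eq_norm_sq, inner_frobVec]

theorem frobNorm_add_le (X Y : Matrix (Fin p) (Fin q) ℝ) :
    frobNorm (X + Y) ≤ frobNorm X + frobNorm Y := by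
  simpa only [frobNorm_eq_norm_frobVec, map_add] using norm_add_le (frobVec X) (frobVec Y)

theorem frobNorm_sub_le (X Y : Matrix (Fin p) (Fin q) ℝ) :
    frobNorm (X - Y) ≤ frobNorm X + frobNorm Y := by
  simpa only [frobNorm_eq_norm_frobVec, map_sub] using norm_sub_le (frobVec X) (frobVec Y)

theorem frobNorm_add_sq (X Y : Matrix (Fin p) (Fin q) ℝ) :
    frobNorm (X + Y) ^ 2 = frobNorm X ^ 2 + 2 * trace (Xᵀ * Y) + frobNorm Y ^ 2 := by
  simpa only [frobNorm_eq_norm_frobVec, map_add, inner_frobVec]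
    using norm_add_sq_real (frobVec X) (frobVec Y)

theorem abs_trace_transpose_mul_le (X Y : Matrix (Fin p) (Fin q) ℝ) :
    |trace (Xᵀ * Y)| ≤ frobNorm X * frobNorm Y := by
  simpa only [frobNorm_eq_norm_frobVec, inner_frobVec]
    using abs_real_inner_le_norm (frobVec X) (frobVec Y)

end Frobenius

section Projection

variable {n : ℕ} {Q : Matrix (Fin n) (Fin n) ℝ}

theorem isStarProjection_iff_transpose :
    IsStarProjection Q ↔ Q * Q = Q ∧ Qᵀ = Q := by
  rw [isStarProjection_iff, IsIdempotentElem, IsSelfAdjoint, star_eq_conjTranspose,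
    conjTranspose_eq_transpose_of_trivial]

theorem IsStarProjection.transpose_eq (hQ : IsStarProjection Q) : Qᵀ = Q :=
  (isStarProjection_iff_transpose.mp hQ).2

theorem IsStarProjection.diag_mem_Icc (hQ : IsStarProjection Q) (i : Fin n) :
    Q i i ∈ Set.Icc 0 1 := by
  have hsum : Q i i = ∑ j, Q i j ^ 2 := by
    conv_lhs => rw [← hQ.isIdempotentElem.eq]
    simp only [mul_apply, sq]
    refine Finset.sum_congr rfl fun j _ => ?_
    rw [← transpose_apply Q j i, hQ.transpose_eq]
  have hle : Q i i ^ 2 ≤ Q i i := hsum ▸ Finset.single_le_sum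
    (f := fun j => Q i j ^ 2) (fun j _ => sq_nonneg _) (Finset.mem_univ i)
  have hnonneg : 0 ≤ Q i i := hsum ▸ Finset.sum_nonneg fun j _ => sq_nonneg _
  exact ⟨hnonneg, by nlinarith⟩

theorem IsStarProjection.conj_orthogonal {W : Matrix (Fin n) (Fin n) ℝ} (hW : Wᵀ * W = 1)
    (hQ : IsStarProjection Q) : IsStarProjection (W * Q * Wᵀ) := by
  rw [isStarProjection_iff_transpose]
  constructor
  · calc W * Q * Wᵀ * (W * Q * Wᵀ) = W * (Q * (Wᵀ * W) * Q) * Wᵀ := by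
          simp only [Matrix.mul_assoc]
      _ = W * Q * Wᵀ := by rw [hW, Matrix.mul_one, hQ.isIdempotentElem.eq, Matrix.mul_assoc]
  · rw [transpose_mul, transpose_mul, transpose_transpose, hQ.transpose_eq, Matrix.mul_assoc]

theorem trace_conj_orthogonal {W : Matrix (Fin n) (Fin n) ℝ} (hW : Wᵀ * W = 1)
    (Q : Matrix (Fin n) (Fin n) ℝ) : trace (W * Q * Wᵀ) = trace Q := by
  rw [trace_mul_comm, ← Matrix.mul_assoc, hW, Matrix.one_mul]

variable {d : ℕ}

theorem frobNorm_mul_sq (M : Matrix (Fin d) (Fin n) ℝ) (hQ : IsStarProjection Q) :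
    frobNorm (M * Q) ^ 2 = trace (Mᵀ * M * Q) := by
  rw [frobNorm_sq, transpose_mul, hQ.transpose_eq]
  calc trace (Q * Mᵀ * (M * Q)) = trace (Q * (Mᵀ * M * Q)) := by simp only [Matrix.mul_assoc]
    _ = trace (Mᵀ * M * (Q * Q)) := by rw [trace_mul_comm, Matrix.mul_assoc]
    _ = trace (Mᵀ * M * Q) := by rw [hQ.isIdempotentElem.eq]

theorem trace_transpose_mul_mul (M : Matrix (Fin d) (Fin n) ℝ) (hQ : IsStarProjection Q) :
    trace ((M * Q)ᵀ * M) = frobNorm (M * Q) ^ 2 := by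
  rw [frobNorm_mul_sq M hQ, transpose_mul, hQ.transpose_eq, Matrix.mul_assoc, trace_mul_comm]

theorem frobNorm_mul_one_sub_sq (M : Matrix (Fin d) (Fin n) ℝ) (hQ : IsStarProjection Q) :
    frobNorm (M * (1 - Q)) ^ 2 = frobNorm M ^ 2 - frobNorm (M * Q) ^ 2 := by
  rw [frobNorm_mul_sq M hQ, frobNorm_mul_sq M hQ.one_sub, frobNorm_sq, Matrix.mul_sub,
    Matrix.mul_one, trace_sub]

theorem frobNorm_mul_le (M : Matrix (Fin d) (Fin n) ℝ) (hQ : IsStarProjection Q) :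
    frobNorm (M * Q) ≤ frobNorm M := by
  have hpyth := frobNorm_mul_one_sub_sq M hQ.one_sub
  rw [sub_sub_cancel] at hpyth
  exact (pow_le_pow_iff_left₀ (frobNorm_nonneg _) (frobNorm_nonneg _) two_ne_zero).mp
    (by nlinarith [sq_nonneg (frobNorm (M * (1 - Q)))])

end Projection

theorem sum_mul_le_sum_mul_indicator_lt {m k : ℕ} {c w : Fin m → ℝ} (hc : Antitone c)
    (hc0 : 0 ≤ c) (hw : ∀ i, w i ∈ Set.Icc 0 1) (hsum : ∑ i, w i ≤ k) :
    ∑ i, c i * w i ≤ ∑ i, c i * (if (i : ℕ) < k then 1 else 0) := by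
  set e : Fin m → ℝ := fun i => if (i : ℕ) < k then 1 else 0
  have hcard : ∑ i, e i = min (m : ℝ) k := by
    simp only [e, Finset.sum_boole, Fin.card_filter_val_lt, Nat.cast_min]
  have hwe : ∑ i, w i ≤ ∑ i, e i := by
    rw [hcard, le_min_iff]
    refine ⟨?_, hsum⟩
    simpa using Finset.sum_le_sum fun i (_ : i ∈ Finset.univ) => (hw i).2
  obtain ⟨t, ht0, hlt, hge⟩ : ∃ t, 0 ≤ t ∧ (∀ i : Fin m, (i : ℕ) < k → t ≤ c i) ∧
      (∀ i : Fin m, k ≤ (i : ℕ) → c i ≤ t) := by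
    by_cases hkm : k < m
    · exact ⟨c ⟨k, hkm⟩, hc0 _, fun i hi => hc (Fin.mk_le_of_le_val hi.le),
        fun i hi => hc (Fin.le_iff_val_le_val.mpr hi)⟩
    · exact ⟨0, le_rfl, fun i _ => hc0 i, fun i hi => absurd i.isLt (by omega)⟩
  have hterm : ∀ i, c i * w i - c i * e i ≤ t * (w i - e i) := by
    intro i
    obtain ⟨hw0, hw1⟩ := hw i
    by_cases hi : (i : ℕ) < k
    · simp only [e, if_pos hi]; nlinarith [hlt i hi]
    · simp only [e, if_neg hi]; nlinarith [hge i (not_lt.mp hi)]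
  have hsum_term := Finset.sum_le_sum fun i (_ : i ∈ Finset.univ) => hterm i
  rw [Finset.sum_sub_distrib, ← Finset.mul_sum, Finset.sum_sub_distrib] at hsum_term
  nlinarith

section Diagonal

theorem trace_diagonal_mul {n : ℕ} (c : Fin n → ℝ) (X : Matrix (Fin n) (Fin n) ℝ) :
    trace (diagonal c * X) = ∑ j, c j * X j j := by
  simp [trace, diagonal_mul]

theorem diagDec_transpose_mul_self (d n : ℕ) (s : ℕ → ℝ) :
    (diagDec d n s)ᵀ * diagDec d n s
      = diagonal fun j : Fin n => if (j : ℕ) < d then s j ^ 2 else 0 := by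
  ext i j
  simp only [mul_apply, transpose_apply, diagDec, of_apply, diagonal_apply, mul_ite, ite_mul,
    zero_mul, mul_zero]
  rw [Fin.sum_univ_eq_sum_range
    (fun l => if l = (j : ℕ) then if l = (i : ℕ) then s l * s l else 0 else 0)]
  simp only [Finset.sum_ite_eq', Finset.mem_range, Fin.val_eq_val, sq]
  by_cases hij : i = j
  · subst hij; simp
  · simp [hij, Ne.symm hij]

def coordProj (n k : ℕ) : Matrix (Fin n) (Fin n) ℝ :=
  diagonal fun j => if (j : ℕ) < k then 1 else 0

theorem isStarProjection_coordProj (n k : ℕ) : IsStarProjection (coordProj n k) := by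
  rw [isStarProjection_iff_transpose, coordProj, diagonal_mul_diagonal, diagonal_transpose]
  simp

theorem trace_coordProj_le (n k : ℕ) : trace (coordProj n k) ≤ k := by
  simp [coordProj, Finset.sum_boole, Fin.card_filter_val_lt]

theorem diagDec_mul_coordProj (d n : ℕ) (s : ℕ → ℝ) (k : ℕ) :
    diagDec d n s * coordProj n k = diagTrunc d n s k := by
  ext i j
  simp only [coordProj, mul_diagonal, diagDec, diagTrunc, of_apply]
  by_cases hij : (i : ℕ) = j <;> by_cases hjk : (j : ℕ) < k <;> simp [hij, hjk]

end Diagonal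

namespace SVDData

variable {d n : ℕ} {M : Matrix (Fin d) (Fin n) ℝ} (sd : SVDData d n M)

def sqSingularValue (j : Fin n) : ℝ := if (j : ℕ) < d then sd.s j ^ 2 else 0

theorem sqSingularValue_nonneg : 0 ≤ sd.sqSingularValue := fun j => by
  unfold sqSingularValue; split_ifs <;> positivity

theorem antitone_sqSingularValue : Antitone sd.sqSingularValue := by
  intro i j hij
  have hij : (i : ℕ) ≤ j := hij
  unfold sqSingularValue
  split_ifs with hj hi hi
  · exact pow_le_pow_left₀ (sd.nonneg j) (sd.anti i j hij) 2
  · omega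
  · positivity
  · rfl

theorem transpose_mul_self : Mᵀ * M = sd.V * diagonal sd.sqSingularValue * sd.Vᵀ := by
  conv_lhs => rw [sd.eq]
  rw [show diagonal sd.sqSingularValue = (diagDec d n sd.s)ᵀ * diagDec d n sd.s from
    (diagDec_transpose_mul_self d n sd.s).symm, transpose_mul, transpose_mul, transpose_transpose]
  calc sd.V * ((diagDec d n sd.s)ᵀ * sd.Uᵀ) * (sd.U * diagDec d n sd.s * sd.Vᵀ)
      = sd.V * ((diagDec d n sd.s)ᵀ * (sd.Uᵀ * sd.U) * diagDec d n sd.s) * sd.Vᵀ := by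
        simp only [Matrix.mul_assoc]
    _ = _ := by rw [sd.orthU, Matrix.mul_one]

def truncProj (k : ℕ) : Matrix (Fin n) (Fin n) ℝ := sd.V * coordProj n k * sd.Vᵀ

theorem isStarProjection_truncProj (k : ℕ) : IsStarProjection (sd.truncProj k) :=
  (isStarProjection_coordProj n k).conj_orthogonal sd.orthV

theorem trace_truncProj_le (k : ℕ) : trace (sd.truncProj k) ≤ k := by
  rw [truncProj, trace_conj_orthogonal sd.orthV]
  exact trace_coordProj_le n k

theorem trunc_eq_mul_truncProj (k : ℕ) : sd.trunc k = M * sd.truncProj k := by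
  calc sd.trunc k = sd.U * diagDec d n sd.s * (sd.Vᵀ * sd.V) * coordProj n k * sd.Vᵀ := by
        rw [trunc, sd.orthV, Matrix.mul_one, ← diagDec_mul_coordProj]
        simp only [Matrix.mul_assoc]
    _ = sd.U * diagDec d n sd.s * sd.Vᵀ * sd.truncProj k := by
        rw [truncProj]; simp only [Matrix.mul_assoc]
    _ = M * sd.truncProj k := by rw [← sd.eq]

theorem trunc_mul_truncProj (k : ℕ) : sd.trunc k * sd.truncProj k = sd.trunc k := by
  rw [trunc_eq_mul_truncProj, Matrix.mul_assoc,
    (sd.isStarProjection_truncProj k).isIdempotentElem.eq]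

theorem trace_trunc_transpose_mul (k : ℕ) :
    trace ((sd.trunc k)ᵀ * M) = frobNorm (sd.trunc k) ^ 2 := by
  rw [sd.trunc_eq_mul_truncProj]
  exact trace_transpose_mul_mul M (sd.isStarProjection_truncProj k)

theorem frobNorm_sub_trunc_sq (k : ℕ) :
    frobNorm (M - sd.trunc k) ^ 2 = frobNorm M ^ 2 - frobNorm (sd.trunc k) ^ 2 := by
  rw [sd.trunc_eq_mul_truncProj, ← frobNorm_mul_one_sub_sq M (sd.isStarProjection_truncProj k),
    Matrix.mul_sub, Matrix.mul_one]

theorem frobNorm_mul_sq_eq_sum {Q : Matrix (Fin n) (Fin n) ℝ} (hQ : IsStarProjection Q) :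
    frobNorm (M * Q) ^ 2 = ∑ j, sd.sqSingularValue j * (sd.Vᵀ * Q * sd.V) j j := by
  rw [frobNorm_mul_sq M hQ, sd.transpose_mul_self, ← trace_diagonal_mul sd.sqSingularValue,
    Matrix.mul_assoc, Matrix.mul_assoc, trace_mul_comm]
  simp only [Matrix.mul_assoc]

theorem frobNorm_mul_le_frobNorm_trunc {Q : Matrix (Fin n) (Fin n) ℝ} (hQ : IsStarProjection Q)
    {k : ℕ} (hk : trace Q ≤ k) : frobNorm (M * Q) ≤ frobNorm (sd.trunc k) := by
  have hVt : sd.Vᵀᵀ * sd.Vᵀ = 1 := by rw [transpose_transpose, mul_eq_one_comm.mp sd.orthV]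
  have hQ' : IsStarProjection (sd.Vᵀ * Q * sd.V) := by
    simpa only [transpose_transpose] using hQ.conj_orthogonal hVt
  have htrace : trace (sd.Vᵀ * Q * sd.V) = trace Q := by
    simpa only [transpose_transpose] using trace_conj_orthogonal hVt Q
  have hcoord : sd.Vᵀ * sd.truncProj k * sd.V = coordProj n k := by
    calc sd.Vᵀ * (sd.V * coordProj n k * sd.Vᵀ) * sd.V
        = (sd.Vᵀ * sd.V) * coordProj n k * (sd.Vᵀ * sd.V) := by simp only [Matrix.mul_assoc]
      _ = _ := by rw [sd.orthV, Matrix.one_mul, Matrix.mul_one]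
  refine (pow_le_pow_iff_left₀ (frobNorm_nonneg _) (frobNorm_nonneg _) two_ne_zero).mp ?_
  rw [sd.frobNorm_mul_sq_eq_sum hQ, sd.trunc_eq_mul_truncProj,
    sd.frobNorm_mul_sq_eq_sum (sd.isStarProjection_truncProj k), hcoord]
  simp only [coordProj, diagonal_apply_eq]
  exact sum_mul_le_sum_mul_indicator_lt sd.antitone_sqSingularValue sd.sqSingularValue_nonneg
    hQ'.diag_mem_Icc (htrace.trans_le hk)

theorem frobNorm_sub_trunc_le {k : ℕ} {B : Matrix (Fin d) (Fin n) ℝ}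
    {Q : Matrix (Fin n) (Fin n) ℝ} (hQ : IsStarProjection Q) (hk : trace Q ≤ k)
    (hB : B * Q = B) : frobNorm (M - sd.trunc k) ≤ frobNorm (M - B) := by
  have hkill : (M - B) * (1 - Q) = M * (1 - Q) := by
    rw [Matrix.sub_mul, Matrix.mul_sub B, Matrix.mul_one, hB, sub_self, sub_zero]
  refine (pow_le_pow_iff_left₀ (frobNorm_nonneg _) (frobNorm_nonneg _) two_ne_zero).mp ?_
  calc frobNorm (M - sd.trunc k) ^ 2 = frobNorm M ^ 2 - frobNorm (sd.trunc k) ^ 2 :=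
        sd.frobNorm_sub_trunc_sq k
    _ ≤ frobNorm M ^ 2 - frobNorm (M * Q) ^ 2 := by
        gcongr
        · exact frobNorm_nonneg _
        · exact sd.frobNorm_mul_le_frobNorm_trunc hQ hk
    _ = frobNorm ((M - B) * (1 - Q)) ^ 2 := by rw [hkill, frobNorm_mul_one_sub_sq M hQ]
    _ ≤ frobNorm (M - B) ^ 2 := by
        gcongr
        · exact frobNorm_nonneg _
        · exact frobNorm_mul_le _ hQ.one_sub

theorem abs_trace_transpose_mul_le_of_mul_eq {k : ℕ} {Y : Matrix (Fin d) (Fin n) ℝ}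
    {Q : Matrix (Fin n) (Fin n) ℝ} (hQ : IsStarProjection Q) (hk : trace Q ≤ k)
    (hY : Y * Q = Y) : |trace (Yᵀ * M)| ≤ frobNorm Y * frobNorm (sd.trunc k) := by
  have hmove : trace (Yᵀ * M) = trace (Yᵀ * (M * Q)) := by
    conv_lhs => rw [← hY, transpose_mul, hQ.transpose_eq, Matrix.mul_assoc, trace_mul_comm]
    rw [Matrix.mul_assoc]
  rw [hmove]
  exact (abs_trace_transpose_mul_le Y (M * Q)).trans <| mul_le_mul_of_nonneg_left
    (sd.frobNorm_mul_le_frobNorm_trunc hQ hk) (frobNorm_nonneg Y)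

theorem abs_trace_trunc_transpose_mul_le {M' : Matrix (Fin d) (Fin n) ℝ}
    (sd' : SVDData d n M') (k : ℕ) :
    |trace ((sd'.trunc k)ᵀ * M)| ≤ frobNorm (sd'.trunc k) * frobNorm (sd.trunc k) :=
  sd.abs_trace_transpose_mul_le_of_mul_eq (sd'.isStarProjection_truncProj k)
    (sd'.trace_truncProj_le k) (sd'.trunc_mul_truncProj k)

end SVDData

section Perturbation

variable {d n : ℕ} {A N : Matrix (Fin d) (Fin n) ℝ}

theorem frobNorm_trunc_add_le (sA : SVDData d n A) (sN : SVDData d n N)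
    (sAN : SVDData d n (A + N)) (k : ℕ) :
    frobNorm (sAN.trunc k) ≤ frobNorm (sA.trunc k) + frobNorm (sN.trunc k) := by
  have hsq : frobNorm (sAN.trunc k) ^ 2
      ≤ frobNorm (sAN.trunc k) * (frobNorm (sA.trunc k) + frobNorm (sN.trunc k)) := by
    rw [← sAN.trace_trunc_transpose_mul, Matrix.mul_add, trace_add, mul_add]
    exact add_le_add ((le_abs_self _).trans (sA.abs_trace_trunc_transpose_mul_le sAN k))
      ((le_abs_self _).trans (sN.abs_trace_trunc_transpose_mul_le sAN k))
  nlinarith [frobNorm_nonneg (sAN.trunc k), frobNorm_nonneg (sA.trunc k),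
    frobNorm_nonneg (sN.trunc k)]

theorem frobNorm_sub_trunc_add_sq_le (sA : SVDData d n A) (sAN : SVDData d n (A + N)) (k : ℕ) :
    frobNorm (A - sAN.trunc k) ^ 2 ≤ frobNorm (A - sA.trunc k) ^ 2
      + 2 * (trace ((sAN.trunc k)ᵀ * N) - trace ((sA.trunc k)ᵀ * N)) := by
  have hEY := pow_le_pow_left₀ (frobNorm_nonneg _) (sAN.frobNorm_sub_trunc_le
    (sA.isStarProjection_truncProj k) (sA.trace_truncProj_le k) (sA.trunc_mul_truncProj k)) 2
  have hsplit : ∀ X : Matrix (Fin d) (Fin n) ℝ, A + N - X = (A - X) + N := fun X => by abel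
  rw [hsplit, hsplit, frobNorm_add_sq, frobNorm_add_sq, transpose_sub, Matrix.sub_mul, trace_sub,
    transpose_sub, Matrix.sub_mul, trace_sub] at hEY
  linarith

end Perturbation

theorem le_add_add_two_mul_sqrt_mul {a b c β h : ℝ} (ha : 0 ≤ a) (hb : 0 ≤ b) (hc : 0 ≤ c)
    (hβ : β ≤ c + b) (htri : h ≤ a + c + β) (hsq : h ^ 2 ≤ a ^ 2 + 2 * b * β + 2 * b * c) :
    h ≤ a + b + 2 * √(b * c) := by
  set s := √(b * c)
  have hs0 : 0 ≤ s := Real.sqrt_nonneg _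
  have hss : s ^ 2 = b * c := Real.sq_sqrt (mul_nonneg hb hc)
  rcases le_total c b with hcb | hbc
  · have hcs : c ≤ s := by nlinarith
    linarith
  · have hbs : b ≤ s := by nlinarith
    nlinarith [mul_le_mul_of_nonneg_left hbs hb, mul_nonneg ha hb, mul_nonneg ha hs0]

theorem achlioptas_mcsherry_frobenius_general
    {d n : ℕ} (A N Ahat : Matrix (Fin d) (Fin n) ℝ) (hAhat : Ahat = A + N)
    (k : ℕ)
    (sA : SVDData d n A) (sN : SVDData d n N) (sAhat : SVDData d n Ahat) :
    frobNorm (A - sAhat.trunc k) ≤ frobNorm (A - sA.trunc k) + frobNorm (sN.trunc k) +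
      2 * Real.sqrt (frobNorm (sN.trunc k) * frobNorm (sA.trunc k)) := by
  subst hAhat
  have htri : frobNorm (A - sAhat.trunc k)
      ≤ frobNorm (A - sA.trunc k) + frobNorm (sA.trunc k) + frobNorm (sAhat.trunc k) := by
    rw [← sub_add_sub_cancel A (sA.trunc k)]
    linarith [frobNorm_add_le (A - sA.trunc k) (sA.trunc k - sAhat.trunc k),
      frobNorm_sub_le (sA.trunc k) (sAhat.trunc k)]
  have hcross_hat := (le_abs_self _).trans (sN.abs_trace_trunc_transpose_mul_le sAhat k)
  have hcross := (neg_abs_le _).trans' (neg_le_neg (sN.abs_trace_trunc_transpose_mul_le sA k))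
  exact le_add_add_two_mul_sqrt_mul (frobNorm_nonneg _) (frobNorm_nonneg _) (frobNorm_nonneg _)
    (frobNorm_trunc_add_le sA sN sAhat k) htri
    (by nlinarith [frobNorm_sub_trunc_add_sq_le sA sAhat k])

/-- Achlioptas–McSherry, Frobenius-norm version: for real d×n matrices A, N with Â = A + N and
every k ≥ 1 (M_k denoting the truncated SVD of M, for any SVDs of Â, A and N):
‖A − Â_k‖_F ≤ ‖A − A_k‖_F + ‖N_k‖_F + 2·sqrt(‖N_k‖_F·‖A_k‖_F). -/
theorem achlioptas_mcsherry_frobenius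
    {d n : ℕ} (A N Ahat : Matrix (Fin d) (Fin n) ℝ) (hAhat : Ahat = A + N)
    (k : ℕ) (hk : 1 ≤ k)
    (sA : SVDData d n A) (sN : SVDData d n N) (sAhat : SVDData d n Ahat) :
    frobNorm (A - sAhat.trunc k) ≤ frobNorm (A - sA.trunc k) + frobNorm (sN.trunc k) +
      2 * Real.sqrt (frobNorm (sN.trunc k) * frobNorm (sA.trunc k)) :=
  achlioptas_mcsherry_frobenius_general A N Ahat hAhat k sA sN sAhat
end
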